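/- For every closed term t of λ_S, exactly one of the following holds: t is a value, or t is a stuck term, or there exist a unique redex r and a unique evaluation context F such that t = F[r]. Consequently the reduction relation is deterministic. -/

import Mathlib

namespace LamS

/-- Terms of the λ-calculus with shift and reset, in de Bruijn representation.
    `lam` and `shift` bind variable 0. -/
inductive Tm : Type
  | var : ℕ → Tm
  | lam : Tm → Tm
  | app : Tm → Tm → Tm
  | shift : Tm → Tm
  | reset : Tm → Tm
  deriving DecidableEq

open Tm

/-- Lift (shift up) free de Bruijn indices `≥ c` by `d`. -/
def liftT (d : ℕ) : ℕ → Tm → Tm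
  | c, var n => if n < c then var n else var (n + d)
  | c, lam t => lam (liftT d (c+1) t)
  | c, app a b => app (liftT d c a) (liftT d c b)
  | c, shift t => shift (liftT d (c+1) t)
  | c, reset t => reset (liftT d c t)

/-- Capture-avoiding substitution `t[j := s]` (de Bruijn). -/
def substT : ℕ → Tm → Tm → Tm
  | j, s, var n => if n = j then liftT j 0 s else if j < n then var (n-1) else var n
  | j, s, lam t => lam (substT (j+1) s t)
  | j, s, app a b => app (substT j s a) (substT j s b)
  | j, s, shift t => shift (substT (j+1) s t)
  | j, s, reset t => reset (substT j s t)

/-- Values are λ-abstractions. -/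
def IsValue (t : Tm) : Prop := ∃ b, t = lam b

/-- All free variables are `< n`. -/
def ClosedUnder : ℕ → Tm → Prop
  | n, var m => m < n
  | n, lam t => ClosedUnder (n+1) t
  | n, app a b => ClosedUnder n a ∧ ClosedUnder n b
  | n, shift t => ClosedUnder (n+1) t
  | n, reset t => ClosedUnder n t

def Closed (t : Tm) : Prop := ClosedUnder 0 t

/-- Pure evaluation contexts, interpreted inside-out:
    `appV b E` is `E[(λ.b) []]` and `appL E t` is `E[[] t]`. -/
inductive PCtx : Type
  | hole : PCtx
  | appV : Tm → PCtx → PCtx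
  | appL : PCtx → Tm → PCtx
  deriving DecidableEq

def PCtx.plug : PCtx → Tm → Tm
  | .hole, t => t
  | .appV b E, t => E.plug (app (lam b) t)
  | .appL E s, t => E.plug (app t s)

def PCtx.liftC (d : ℕ) : ℕ → PCtx → PCtx
  | _, .hole => .hole
  | c, .appV b E => .appV (liftT d (c+1) b) (PCtx.liftC d c E)
  | c, .appL E s => .appL (PCtx.liftC d c E) (liftT d c s)

/-- Composition of pure contexts: `(E.comp E').plug t = E.plug (E'.plug t)`. -/
def PCtx.comp : PCtx → PCtx → PCtx
  | E, .hole => E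
  | E, .appV b E' => .appV b (E.comp E')
  | E, .appL E' s => .appL (E.comp E') s

/-- The captured delimited continuation `λx.⟨E[x]⟩`. -/
def contOf (E : PCtx) : Tm := lam (reset ((PCtx.liftC 1 0 E).plug (var 0)))

/-- Call-by-value evaluation contexts, interpreted inside-out. -/
inductive ECtx : Type
  | hole : ECtx
  | appV : Tm → ECtx → ECtx
  | appL : ECtx → Tm → ECtx
  | resetC : ECtx → ECtx
  deriving DecidableEq

def ECtx.plug : ECtx → Tm → Tm
  | .hole, t => t
  | .appV b F, t => F.plug (app (lam b) t)
  | .appL F s, t => F.plug (app t s)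
  | .resetC F, t => F.plug (reset t)

def ClosedECtx : ECtx → Prop
  | .hole => True
  | .appV b F => ClosedUnder 1 b ∧ ClosedECtx F
  | .appL F s => ClosedECtx F ∧ Closed s
  | .resetC F => ClosedECtx F

/-- One-step reduction of λ_S. -/
inductive Red : Tm → Tm → Prop
  | beta (F : ECtx) (t v : Tm) (hv : IsValue v) :
      Red (F.plug (app (lam t) v)) (F.plug (substT 0 v t))
  | cap (F : ECtx) (E : PCtx) (t : Tm) :
      Red (F.plug (reset (E.plug (shift t)))) (F.plug (reset (substT 0 (contOf E) t)))
  | res (F : ECtx) (v : Tm) (hv : IsValue v) :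
      Red (F.plug (reset v)) (F.plug v)

def RedStar : Tm → Tm → Prop := Relation.ReflTransGen Red

/-- A term is stuck if it is not a value and cannot reduce. -/
def Stuck (t : Tm) : Prop := ¬ IsValue t ∧ ∀ u, ¬ Red t u

/-- Evaluation: reduce to an irreducible term. -/
def Eval (t t' : Tm) : Prop := RedStar t t' ∧ ∀ u, ¬ Red t' u

def IsRedex (r : Tm) : Prop :=
  (∃ t v, IsValue v ∧ r = app (lam t) v) ∨
  (∃ E s, r = reset (PCtx.plug E (shift s))) ∨
  (∃ v, IsValue v ∧ r = reset v)

/-- Labels of the LTS. -/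
inductive Label : Type
  | tau : Label
  | val : Tm → Label
  | ctx : PCtx → Label

/-- The labelled transition system for λ_S. -/
inductive Step : Tm → Label → Tm → Prop
  | beta {t v : Tm} (hv : IsValue v) :
      Step (app (lam t) v) .tau (substT 0 v t)
  | resetVal {v : Tm} (hv : IsValue v) :
      Step (reset v) .tau v
  | appL {t0 t0' t1 : Tm} :
      Step t0 .tau t0' → Step (app t0 t1) .tau (app t0' t1)
  | appR {v t t' : Tm} (hv : IsValue v) :
      Step t .tau t' → Step (app v t) .tau (app v t')
  | resetT {t t' : Tm} :
      Step t .tau t' → Step (reset t) .tau (reset t')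
  | resetCap {t t' : Tm} :
      Step t (.ctx .hole) t' → Step (reset t) .tau t'
  | lamApp {t v : Tm} (hv : IsValue v) :
      Step (lam t) (.val v) (substT 0 v t)
  | shiftCap {t : Tm} (E : PCtx) :
      Step (shift t) (.ctx E) (reset (substT 0 (contOf E) t))
  | capL {t0 t0' t1 : Tm} {E : PCtx} :
      Step t0 (.ctx (.appL E t1)) t0' → Step (app t0 t1) (.ctx E) t0'
  | capR {b t t' : Tm} {E : PCtx} :
      Step t (.ctx (.appV b E)) t' → Step (app (lam b) t) (.ctx E) t'

def TauStar : Tm → Tm → Prop := Relation.ReflTransGen (fun a b => Step a .tau b)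

/-- Weak delay transition: τ-steps, then an `l`-step if `l ≠ τ`. -/
def Weak (t : Tm) (l : Label) (t' : Tm) : Prop :=
  match l with
  | .tau => TauStar t t'
  | _ => ∃ u, TauStar t u ∧ Step u l t'

/-- Applicative simulation. -/
def IsSim (R : Tm → Tm → Prop) : Prop :=
  ∀ ⦃t0 t1⦄, R t0 t1 → ∀ ⦃l t0'⦄, Step t0 l t0' →
    ∃ t1', Weak t1 l t1' ∧ R t0' t1'

def IsBisim (R : Tm → Tm → Prop) : Prop := IsSim R ∧ IsSim (flip R)

/-- Applicative bisimilarity: the largest applicative bisimulation. -/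
def Bisim (t0 t1 : Tm) : Prop := ∃ R, IsBisim R ∧ R t0 t1

/-- Big-step applicative simulation. -/
def IsBigSim (R : Tm → Tm → Prop) : Prop :=
  ∀ ⦃t0 t1⦄, R t0 t1 → ∀ ⦃l t0'⦄, l ≠ Label.tau → Weak t0 l t0' →
    ∃ t1', Weak t1 l t1' ∧ R t0' t1'

def IsBigBisim (R : Tm → Tm → Prop) : Prop := IsBigSim R ∧ IsBigSim (flip R)

/-- Big-step applicative bisimilarity. -/
def BigBisim (t0 t1 : Tm) : Prop := ∃ R, IsBigBisim R ∧ R t0 t1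

/-- General contexts. -/
inductive Ctx : Type
  | hole : Ctx
  | lam : Ctx → Ctx
  | appL : Ctx → Tm → Ctx
  | appR : Tm → Ctx → Ctx
  | shift : Ctx → Ctx
  | reset : Ctx → Ctx

/-- Plugging a term in a general context (free variables may be captured). -/
def Ctx.plug : Ctx → Tm → Tm
  | .hole, t => t
  | .lam C, t => Tm.lam (C.plug t)
  | .appL C s, t => Tm.app (C.plug t) s
  | .appR s C, t => Tm.app s (C.plug t)
  | .shift C, t => Tm.shift (C.plug t)
  | .reset C, t => Tm.reset (C.plug t)

def CtxClosedUnder : ℕ → Ctx → Prop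
  | _, .hole => True
  | n, .lam C => CtxClosedUnder (n+1) C
  | n, .appL C s => CtxClosedUnder n C ∧ ClosedUnder n s
  | n, .appR s C => ClosedUnder n s ∧ CtxClosedUnder n C
  | n, .shift C => CtxClosedUnder (n+1) C
  | n, .reset C => CtxClosedUnder n C

def ClosedCtx (C : Ctx) : Prop := CtxClosedUnder 0 C

def EvalsToValue (t : Tm) : Prop := ∃ v, IsValue v ∧ Eval t v

def EvalsToStuck (t : Tm) : Prop := ∃ s, Stuck s ∧ Eval t s

/-- Contextual equivalence on closed terms. -/
def CtxEquiv (t0 t1 : Tm) : Prop :=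
  ∀ C : Ctx, ClosedCtx C →
    (EvalsToValue (C.plug t0) ↔ EvalsToValue (C.plug t1)) ∧
    (EvalsToStuck (C.plug t0) ↔ EvalsToStuck (C.plug t1))

/-- Contextual equivalence restricted to evaluation contexts. -/
def ECtxEquiv (t0 t1 : Tm) : Prop :=
  ∀ F : ECtx, ClosedECtx F →
    (EvalsToValue (F.plug t0) ↔ EvalsToValue (F.plug t1)) ∧
    (EvalsToStuck (F.plug t0) ↔ EvalsToStuck (F.plug t1))

/-- Lifting a substitution under a binder. -/
def liftSub (σ : ℕ → Tm) : ℕ → Tm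
  | 0 => var 0
  | n+1 => liftT 1 0 (σ n)

/-- Apply a substitution to all free variables of a term. -/
def applySub (σ : ℕ → Tm) : Tm → Tm
  | var n => σ n
  | lam t => lam (applySub (liftSub σ) t)
  | app a b => app (applySub σ a) (applySub σ b)
  | shift t => shift (applySub (liftSub σ) t)
  | reset t => reset (applySub σ t)

/-- A closing substitution maps every variable to a closed value. -/
def ClosingSub (σ : ℕ → Tm) : Prop := ∀ n, IsValue (σ n) ∧ Closed (σ n)

/-- Open extension of a relation on closed terms. -/
def OpenExt (R : Tm → Tm → Prop) (t0 t1 : Tm) : Prop :=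
  ∀ σ, ClosingSub σ → R (applySub σ t0) (applySub σ t1)

/-- Howe's closure of applicative bisimilarity (compatible refinement rules inlined). -/
inductive Howe : Tm → Tm → Prop
  | base {t0 t1} : OpenExt Bisim t0 t1 → Howe t0 t1
  | right {t0 t2 t1} : Howe t0 t2 → OpenExt Bisim t2 t1 → Howe t0 t1
  | compVar (n : ℕ) : Howe (var n) (var n)
  | compLam {t0 t1} : Howe t0 t1 → Howe (lam t0) (lam t1)
  | compApp {a0 a1 b0 b1} : Howe a0 a1 → Howe b0 b1 → Howe (app a0 b0) (app a1 b1)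
  | compShift {t0 t1} : Howe t0 t1 → Howe (shift t0) (shift t1)
  | compReset {t0 t1} : Howe t0 t1 → Howe (reset t0) (reset t1)

/-- Howe's closure restricted to closed terms. -/
def HoweC (t0 t1 : Tm) : Prop := Closed t0 ∧ Closed t1 ∧ Howe t0 t1

/-- Extension of Howe's closure to pure contexts. -/
inductive PCtxHowe : PCtx → PCtx → Prop
  | hole : PCtxHowe .hole .hole
  | appV {b0 b1 E0 E1} : Howe b0 b1 → PCtxHowe E0 E1 → PCtxHowe (.appV b0 E0) (.appV b1 E1)
  | appL {E0 E1 t0 t1} : PCtxHowe E0 E1 → Howe t0 t1 → PCtxHowe (.appL E0 t0) (.appL E1 t1)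

/-- Extension of Howe's closure to labels. -/
def LabHowe : Label → Label → Prop
  | .tau, .tau => True
  | .val v0, .val v1 => Closed v0 ∧ Closed v1 ∧ Howe v0 v1
  | .ctx E0, .ctx E1 => PCtxHowe E0 E1
  | _, _ => False

/-- ω = λx. x x -/
def omegaTm : Tm := lam (app (var 0) (var 0))

/-- Ω = ω ω, the standard diverging term. -/
def OmegaTm : Tm := app omegaTm omegaTm

/-- Every τ-reachable term can do a τ-step: only infinite τ-sequences. -/
def Diverges (t : Tm) : Prop := ∀ u, TauStar t u → ∃ u', Step u .tau u'

/-- No weak non-τ transition. -/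
def NoObs (t : Tm) : Prop := ∀ l t', l ≠ Label.tau → ¬ Weak t l t'

end LamS

/-!
A structural recursion `decompose` follows call-by-value evaluation order down a closed term and
finds where evaluation acts: the term is a λ-abstraction, or a `shift` under a pure context (which,
below the nearest enclosing `reset`, is part of a capture redex), or a redex under an evaluation
context.
Decomposing `F[r]` for a redex `r` returns exactly `(F, r)`, and decomposing `E[Sk.s]` returns
`(E, s)`, so decompositions are unique; as every redex contracts in only one way, reduction is
deterministic.
-/

namespace LamS

open Tm

def ECtx.comp : ECtx → ECtx → ECtx
  | F, .hole => F
  | F, .appV b G => .appV b (F.comp G)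
  | F, .appL G s => .appL (F.comp G) s
  | F, .resetC G => .resetC (F.comp G)

namespace ECtx

theorem comp_plug (F G : ECtx) (t : Tm) : (F.comp G).plug t = F.plug (G.plug t) := by
  induction G generalizing t <;> simp [comp, plug, *]

theorem hole_comp (G : ECtx) : hole.comp G = G := by
  induction G <;> simp [comp, *]

theorem comp_assoc (A B C : ECtx) : (A.comp B).comp C = A.comp (B.comp C) := by
  induction C <;> simp [comp, *]

end ECtx

namespace PCtx

theorem comp_plug (E E' : PCtx) (t : Tm) : (E.comp E').plug t = E.plug (E'.plug t) := by
  induction E' generalizing t <;> simp [comp, plug, *]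

theorem hole_comp (E : PCtx) : hole.comp E = E := by
  induction E <;> simp [comp, *]

theorem comp_assoc (A B C : PCtx) : (A.comp B).comp C = A.comp (B.comp C) := by
  induction C <;> simp [comp, *]

end PCtx

inductive Decomp : Type
  | val : Tm → Decomp
  | stuck : PCtx → Tm → Decomp
  | red : ECtx → Tm → Decomp
  /-- A free variable occurs in evaluation position. -/
  | bad : Decomp

def Decomp.Describes (t : Tm) : Decomp → Prop
  | .val b => t = lam b
  | .stuck E s => t = E.plug (shift s)
  | .red F r => IsRedex r ∧ t = F.plug r
  | .bad => True

def decompose : Tm → Decomp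
  | var _ => .bad
  | lam b => .val b
  | shift s => .stuck .hole s
  | app a b =>
      match decompose a with
      | .val a' =>
          match decompose b with
          | .val _ => .red .hole (app a b)
          | .stuck E s => .stuck ((PCtx.appV a' .hole).comp E) s
          | .red F r => .red ((ECtx.appV a' .hole).comp F) r
          | .bad => .bad
      | .stuck E s => .stuck ((PCtx.appL .hole b).comp E) s
      | .red F r => .red ((ECtx.appL .hole b).comp F) r
      | .bad => .bad
  | reset u =>
      match decompose u with
      | .val _ | .stuck _ _ => .red .hole (reset u)
      | .red F r => .red ((ECtx.resetC .hole).comp F) r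
      | .bad => .bad

theorem decompose_describes (t : Tm) : (decompose t).Describes t := by
  induction t with
  | var _ => trivial
  | lam b => rfl
  | shift s => rfl
  | app a b iha ihb =>
      simp only [decompose]
      split <;> try split
      all_goals simp_all [Decomp.Describes, IsRedex, IsValue, PCtx.comp_plug, ECtx.comp_plug,
        PCtx.plug, ECtx.plug]
  | reset u ih =>
      simp only [decompose]
      split <;> rename_i h <;> rw [h] at ih <;> simp only [Decomp.Describes] at ih ⊢
      · exact ⟨.inr (.inr ⟨u, ⟨_, ih⟩, rfl⟩), rfl⟩
      · exact ⟨.inr (.inl ⟨_, _, by rw [ih]⟩), rfl⟩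
      · exact ⟨ih.1, by rw [ECtx.comp_plug, ih.2]; rfl⟩

theorem decompose_ne_bad {t : Tm} (ht : Closed t) : decompose t ≠ .bad := by
  unfold Closed at ht
  induction t with
  | var n => exact absurd ht (Nat.not_lt_zero n)
  | lam b => nofun
  | shift s => nofun
  | app a b iha ihb =>
      obtain ⟨ha, hb⟩ := ht
      simp only [decompose]
      split <;> try split
      all_goals simp_all
  | reset u ih =>
      simp only [decompose]
      split <;> simp_all [ClosedUnder]

theorem decompose_plug_of_stuck (E : PCtx) {u : Tm} {E' : PCtx} {s : Tm}
    (h : decompose u = .stuck E' s) : decompose (E.plug u) = .stuck (E.comp E') s := by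
  induction E generalizing u E' with
  | hole => rwa [PCtx.hole_comp]
  | appV b E ih =>
      rw [PCtx.plug, ih (E' := (PCtx.appV b .hole).comp E') (by simp only [decompose, h]),
        ← PCtx.comp_assoc]
      rfl
  | appL E t ih =>
      rw [PCtx.plug, ih (E' := (PCtx.appL .hole t).comp E') (by simp only [decompose, h]),
        ← PCtx.comp_assoc]
      rfl

theorem decompose_plug_of_red (F : ECtx) {u : Tm} {G : ECtx} {r : Tm}
    (h : decompose u = .red G r) : decompose (F.plug u) = .red (F.comp G) r := by
  induction F generalizing u G with
  | hole => rwa [ECtx.hole_comp]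
  | appV b F ih =>
      rw [ECtx.plug, ih (G := (ECtx.appV b .hole).comp G) (by simp only [decompose, h]),
        ← ECtx.comp_assoc]
      rfl
  | appL F t ih =>
      rw [ECtx.plug, ih (G := (ECtx.appL .hole t).comp G) (by simp only [decompose, h]),
        ← ECtx.comp_assoc]
      rfl
  | resetC F ih =>
      rw [ECtx.plug, ih (G := (ECtx.resetC .hole).comp G) (by simp only [decompose, h]),
        ← ECtx.comp_assoc]
      rfl

theorem decompose_plug_shift (E : PCtx) (s : Tm) : decompose (E.plug (shift s)) = .stuck E s :=
  decompose_plug_of_stuck E (u := shift s) (E' := .hole) rfl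

theorem IsRedex.decompose_eq {r : Tm} (hr : IsRedex r) : decompose r = .red .hole r := by
  rcases hr with ⟨t, v, ⟨b, rfl⟩, rfl⟩ | ⟨E, s, rfl⟩ | ⟨v, ⟨b, rfl⟩, rfl⟩
  · rfl
  · simp only [decompose, decompose_plug_shift]
  · rfl

theorem decompose_plug_redex (F : ECtx) {r : Tm} (hr : IsRedex r) :
    decompose (F.plug r) = .red F r :=
  decompose_plug_of_red F hr.decompose_eq

theorem PCtx.plug_shift_inj {E₁ E₂ : PCtx} {s₁ s₂ : Tm}
    (h : E₁.plug (shift s₁) = E₂.plug (shift s₂)) : E₁ = E₂ ∧ s₁ = s₂ := by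
  have := decompose_plug_shift E₁ s₁
  rw [h, decompose_plug_shift] at this
  obtain ⟨rfl, rfl⟩ := Decomp.stuck.inj this
  exact ⟨rfl, rfl⟩

theorem plug_redex_inj {F₁ F₂ : ECtx} {r₁ r₂ : Tm} (h₁ : IsRedex r₁) (h₂ : IsRedex r₂)
    (h : F₁.plug r₁ = F₂.plug r₂) : F₁ = F₂ ∧ r₁ = r₂ := by
  have := decompose_plug_redex F₁ h₁
  rw [h, decompose_plug_redex F₂ h₂] at this
  obtain ⟨rfl, rfl⟩ := Decomp.red.inj this
  exact ⟨rfl, rfl⟩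

theorem not_isValue_plug_shift (E : PCtx) (s : Tm) : ¬ IsValue (E.plug (shift s)) := by
  rintro ⟨b, hb⟩
  have := decompose_plug_shift E s
  rw [hb] at this
  cases this

theorem not_isValue_plug_redex (F : ECtx) {r : Tm} (hr : IsRedex r) : ¬ IsValue (F.plug r) := by
  rintro ⟨b, hb⟩
  have := decompose_plug_redex F hr
  rw [hb] at this
  cases this

inductive Contract : Tm → Tm → Prop
  | beta (t v : Tm) (hv : IsValue v) : Contract (app (lam t) v) (substT 0 v t)
  | cap (E : PCtx) (t : Tm) :
      Contract (reset (E.plug (shift t))) (reset (substT 0 (contOf E) t))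
  | res (v : Tm) (hv : IsValue v) : Contract (reset v) v

theorem Contract.isRedex {r r' : Tm} (h : Contract r r') : IsRedex r := by
  cases h with
  | beta t v hv => exact .inl ⟨t, v, hv, rfl⟩
  | cap E t => exact .inr (.inl ⟨E, t, rfl⟩)
  | res _ hv => exact .inr (.inr ⟨_, hv, rfl⟩)

theorem IsRedex.exists_contract {r : Tm} (hr : IsRedex r) : ∃ r', Contract r r' := by
  rcases hr with ⟨t, v, hv, rfl⟩ | ⟨E, s, rfl⟩ | ⟨v, hv, rfl⟩
  exacts [⟨_, .beta t v hv⟩, ⟨_, .cap E s⟩, ⟨_, .res v hv⟩]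

theorem Contract.red {r r' : Tm} (h : Contract r r') (F : ECtx) : Red (F.plug r) (F.plug r') := by
  cases h with
  | beta t v hv => exact .beta F t v hv
  | cap E t => exact .cap F E t
  | res _ hv => exact .res F _ hv

theorem Red.exists_contract {t u : Tm} (h : Red t u) :
    ∃ (F : ECtx) (r r' : Tm), Contract r r' ∧ t = F.plug r ∧ u = F.plug r' := by
  cases h with
  | beta F t v hv => exact ⟨F, _, _, .beta t v hv, rfl, rfl⟩
  | cap F E s => exact ⟨F, _, _, .cap E s, rfl, rfl⟩
  | res F v hv => exact ⟨F, _, _, .res v hv, rfl, rfl⟩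

theorem Contract.deterministic {r u₁ u₂ : Tm} (h₁ : Contract r u₁) (h₂ : Contract r u₂) :
    u₁ = u₂ := by
  cases h₁ with
  | beta t v hv => cases h₂; rfl
  | cap E t =>
      generalize hr : reset (E.plug (shift t)) = r at h₂
      cases h₂ with
      | beta => cases hr
      | cap E' t' =>
          obtain ⟨rfl, rfl⟩ := PCtx.plug_shift_inj (reset.inj hr)
          rfl
      | res v hv => exact absurd (reset.inj hr ▸ hv) (not_isValue_plug_shift E t)
  | res v hv =>
      cases h₂ with
      | res => rfl
      | cap E t => exact absurd hv (not_isValue_plug_shift E t)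

theorem Red.deterministic {t u₁ u₂ : Tm} (h₁ : Red t u₁) (h₂ : Red t u₂) : u₁ = u₂ := by
  obtain ⟨F₁, r₁, r₁', hc₁, rfl, rfl⟩ := h₁.exists_contract
  obtain ⟨F₂, r₂, r₂', hc₂, he, rfl⟩ := h₂.exists_contract
  obtain ⟨rfl, rfl⟩ := plug_redex_inj hc₁.isRedex hc₂.isRedex he
  rw [hc₁.deterministic hc₂]

theorem stuck_plug_shift (E : PCtx) (s : Tm) : Stuck (E.plug (shift s)) := by
  refine ⟨not_isValue_plug_shift E s, fun u h => ?_⟩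
  obtain ⟨F, r, _, hc, he, -⟩ := h.exists_contract
  have := decompose_plug_shift E s
  rw [he, decompose_plug_redex F hc.isRedex] at this
  cases this

theorem existsUnique_plug_redex_iff {t : Tm} :
    (∃! p : ECtx × Tm, IsRedex p.2 ∧ t = p.1.plug p.2) ↔
      ∃ (F : ECtx) (r : Tm), IsRedex r ∧ t = F.plug r := by
  refine ⟨fun ⟨⟨F, r⟩, h, _⟩ => ⟨F, r, h⟩, fun ⟨F, r, hr, ht⟩ => ⟨(F, r), ⟨hr, ht⟩, ?_⟩⟩
  rintro ⟨F', r'⟩ ⟨hr', ht'⟩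
  obtain ⟨rfl, rfl⟩ := plug_redex_inj hr' hr (ht'.symm.trans ht)
  rfl

theorem isValue_or_stuck_or_plug_redex {t : Tm} (ht : Closed t) :
    IsValue t ∨ Stuck t ∨ ∃ (F : ECtx) (r : Tm), IsRedex r ∧ t = F.plug r := by
  have h := decompose_describes t
  rcases hd : decompose t with b | ⟨E, s⟩ | ⟨F, r⟩ | _ <;> rw [hd] at h
  · exact .inl ⟨b, h⟩
  · exact .inr (.inl (h ▸ stuck_plug_shift E s))
  · exact .inr (.inr ⟨F, r, h⟩)
  · exact absurd hd (decompose_ne_bad ht)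

end LamS

open LamS LamS.Tm in
/-- unique decomposition and determinism of reduction. -/
theorem unique_decomposition_and_determinism :
    ∀ t : Tm, Closed t →
      ((IsValue t ∨ Stuck t ∨
          (∃! p : ECtx × Tm, IsRedex p.2 ∧ t = p.1.plug p.2)) ∧
        ¬ (IsValue t ∧ Stuck t) ∧
        ¬ (IsValue t ∧ ∃! p : ECtx × Tm, IsRedex p.2 ∧ t = p.1.plug p.2) ∧
        ¬ (Stuck t ∧ ∃! p : ECtx × Tm, IsRedex p.2 ∧ t = p.1.plug p.2) ∧
        ∀ u1 u2, Red t u1 → Red t u2 → u1 = u2) := by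
  intro t ht
  simp only [existsUnique_plug_redex_iff]
  refine ⟨isValue_or_stuck_or_plug_redex ht, fun h => h.2.1 h.1, ?_, ?_,
    fun _ _ => Red.deterministic⟩
  · rintro ⟨hv, F, r, hr, rfl⟩
    exact not_isValue_plug_redex F hr hv
  · rintro ⟨hs, F, r, hr, rfl⟩
    obtain ⟨r', hc⟩ := hr.exists_contract
    exact hs.2 _ (hc.red F)
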